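/- The inequality β_p(Čech_1, Čech_{1+ε}) ≤ β_p(Q_1) can be strict: there exist three points in ℝ^2 (equally spaced on a circle of radius strictly between 1 and 1+ε, for suitable ε > 0) and a partition Ψ of mesh ε such that β_1(Čech_1, Čech_{1+ε}) = 0 while β_1(Q_1) = 1. -/

import Mathlib

/-- The radius of the smallest closed ball enclosing `B`. -/
noncomputable def encRad {d : ℕ} (B : Finset (EuclideanSpace ℝ (Fin d))) : ℝ :=
  sInf {r | ∃ x, ∀ b ∈ B, dist b x ≤ r}

/-- The Čech complex of `A ⊆ ℝ^d` at scale `r`: nonempty subsets of `A` such that the closed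
balls of radius `r` around the points have a common point. -/
def cech (d : ℕ) (r : ℝ) (A : Finset (EuclideanSpace ℝ (Fin d))) :
    Set (Finset (EuclideanSpace ℝ (Fin d))) :=
  {B | B.Nonempty ∧ ↑B ⊆ (↑A : Set (EuclideanSpace ℝ (Fin d))) ∧ ∃ x, ∀ b ∈ B, dist b x ≤ r}

/-- `Ψ` is a partition of `ℝ^d` into cells of diameter at most `ε`. -/
def IsPartitionMesh (d : ℕ) (ε : ℝ) (Ψ : Set (Set (EuclideanSpace ℝ (Fin d)))) : Prop :=
  (∀ x, ∃! ψ, ψ ∈ Ψ ∧ x ∈ ψ) ∧ ∀ ψ ∈ Ψ, EMetric.diam ψ ≤ ENNReal.ofReal ε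

attribute [local instance] Classical.propDecidable

/-- The mod-2 simplicial boundary operator on formal sums of finite vertex sets. -/
noncomputable def bdry (V : Type*) [DecidableEq V] :
    (Finset V →₀ ZMod 2) →ₗ[ZMod 2] (Finset V →₀ ZMod 2) :=
  Finsupp.lsum (ZMod 2) fun σ =>
    LinearMap.toSpanSingleton (ZMod 2) _ (∑ v ∈ σ, Finsupp.single (σ.erase v) (1 : ZMod 2))

/-- Chains supported on the `p`-simplices (sets of `p+1` vertices) of `K`. -/
noncomputable def chainsIn {V : Type*} (K : Set (Finset V)) (p : ℕ) :
    Submodule (ZMod 2) (Finset V →₀ ZMod 2) :=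
  Finsupp.supported (ZMod 2) (ZMod 2) {σ | σ ∈ K ∧ σ.card = p + 1}

noncomputable def cyclesIn {V : Type*} [DecidableEq V] (K : Set (Finset V)) (p : ℕ) :
    Submodule (ZMod 2) (Finset V →₀ ZMod 2) :=
  chainsIn K p ⊓ LinearMap.ker (bdry V)

noncomputable def bdriesIn {V : Type*} [DecidableEq V] (K : Set (Finset V)) (p : ℕ) :
    Submodule (ZMod 2) (Finset V →₀ ZMod 2) :=
  Submodule.map (bdry V) (chainsIn K (p + 1))

/-- The `p`-th persistent Betti number of `K ⊆ L`: the rank of the image of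
`H_p(K) → H_p(L)`, computed as `Z_p(K) / (Z_p(K) ∩ B_p(L))`. -/
noncomputable def pBetti {V : Type*} [DecidableEq V] (K L : Set (Finset V)) (p : ℕ) : Cardinal :=
  Module.rank (ZMod 2) ↥(Submodule.map (bdriesIn L p).mkQ (cyclesIn K p))

noncomputable def betti {V : Type*} [DecidableEq V] (K : Set (Finset V)) (p : ℕ) : Cardinal :=
  pBetti K K p

/-- Pushforward of a `p`-chain along a vertex map; degenerate simplices are dropped and
coinciding images cancel mod 2. -/
noncomputable def pushChain {V W : Type*} [DecidableEq V] [DecidableEq W]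
    (q : V → W) (p : ℕ) (c : Finset V →₀ ZMod 2) : Finset W →₀ ZMod 2 :=
  Finsupp.filter (fun τ => τ.card = p + 1)
    (Finsupp.mapDomain (fun σ : Finset V => σ.image q) c)

/-- Gluing vertices `x` and `y` of a `p`-chain to a new vertex `z`. -/
noncomputable def glueChain {V : Type*} [DecidableEq V] (x y z : V) (p : ℕ)
    (c : Finset V →₀ ZMod 2) : Finset V →₀ ZMod 2 :=
  pushChain (fun v => if v = x ∨ v = y then z else v) p c

/-- The star of a vertex in a chain: the simplices of the chain containing it. -/
noncomputable def starChain {V : Type*} (x : V) (c : Finset V →₀ ZMod 2) :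
    Finset V →₀ ZMod 2 :=
  Finsupp.filter (fun σ => x ∈ σ) c

/-- The cone over a chain with apex `z`. -/
noncomputable def coneChain {V : Type*} [DecidableEq V] (z : V) (c : Finset V →₀ ZMod 2) :
    Finset V →₀ ZMod 2 :=
  Finsupp.mapDomain (insert z) c


/-! ### Auxiliary algebraic lemmas -/

section Alg
variable {V : Type*} [DecidableEq V]

lemma bdry_single (σ : Finset V) :
    bdry V (Finsupp.single σ (1 : ZMod 2)) = ∑ v ∈ σ, Finsupp.single (σ.erase v) 1 := by
  simp [bdry, Finsupp.lsum_single, LinearMap.toSpanSingleton_apply]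

lemma bdry_pair {a b : V} (hab : a ≠ b) :
    bdry V (Finsupp.single {a, b} (1 : ZMod 2)) =
      Finsupp.single {b} 1 + Finsupp.single {a} 1 := by
  have e1 : ({a, b} : Finset V).erase a = {b} := by
    rw [Finset.erase_insert (by simp [hab])]
  have e2 : ({a, b} : Finset V).erase b = {a} := by
    rw [Finset.erase_insert_of_ne hab]; simp
  rw [bdry_single, Finset.sum_pair hab, e1, e2]

lemma bdry_triple {a b c : V} (hab : a ≠ b) (hac : a ≠ c) (hbc : b ≠ c) :
    bdry V (Finsupp.single {a, b, c} (1 : ZMod 2)) =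
      Finsupp.single {b, c} 1 + Finsupp.single {a, c} 1 + Finsupp.single {a, b} 1 := by
  have e1 : ({a, b, c} : Finset V).erase a = {b, c} := by
    rw [Finset.erase_insert (by simp [hab, hac])]
  have e2 : ({a, b, c} : Finset V).erase b = {a, c} := by
    rw [Finset.erase_insert_of_ne hab, Finset.erase_insert (by simp [hbc])]
  have e3 : ({a, b, c} : Finset V).erase c = {a, b} := by
    rw [Finset.erase_insert_of_ne hac, Finset.erase_insert_of_ne hbc]; simp
  rw [bdry_single, Finset.sum_insert (by simp [hab, hac]), Finset.sum_pair hbc, e1, e2, e3]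
  abel

lemma char2_add_self {M : Type*} [AddCommGroup M] [Module (ZMod 2) M] (m : M) : m + m = 0 := by
  have h : ((1 : ZMod 2) + 1) • m = 0 := by
    rw [show (1 : ZMod 2) + 1 = 0 by decide, zero_smul]
  simpa [add_smul] using h

lemma single_mem_chainsIn {K : Set (Finset V)} {p : ℕ} {e : Finset V}
    (he : e ∈ K) (hc : e.card = p + 1) :
    Finsupp.single e (1 : ZMod 2) ∈ chainsIn K p := by
  rw [chainsIn, Finsupp.mem_supported]
  intro σ hσ
  have := Finsupp.support_single_subset hσ
  simp only [Finset.mem_singleton] at this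
  subst this
  exact ⟨he, hc⟩

lemma pair_ne_pair₁ {a b c : V} (hab : a ≠ b) (hac : a ≠ c) :
    ({a, b} : Finset V) ≠ {b, c} := by
  intro h
  have : a ∈ ({b, c} : Finset V) := h ▸ Finset.mem_insert_self a {b}
  simp [hab, hac] at this

lemma pair_ne_pair₂ {a b c : V} (hab : a ≠ b) (hbc : b ≠ c) :
    ({a, b} : Finset V) ≠ {a, c} := by
  intro h
  have : b ∈ ({a, c} : Finset V) := h ▸ (by simp : b ∈ ({a, b} : Finset V))
  simp [hab.symm, hbc] at this

lemma pair_ne_pair₃ {a b c : V} (hab : a ≠ b) (hbc : b ≠ c) :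
    ({b, c} : Finset V) ≠ {a, c} := by
  intro h
  have : b ∈ ({a, c} : Finset V) := h ▸ Finset.mem_insert_self b {c}
  simp [hab.symm, hbc] at this

lemma subset_card_two {a b c : V} (hab : a ≠ b) (hac : a ≠ c) (hbc : b ≠ c)
    {σ : Finset V} (hsub : σ ⊆ {a, b, c}) (hcard : σ.card = 2) :
    σ = {a, b} ∨ σ = {b, c} ∨ σ = {a, c} := by
  obtain ⟨x, y, hxy, rfl⟩ := Finset.card_eq_two.mp hcard
  have hx : x ∈ ({a, b, c} : Finset V) := hsub (by simp)
  have hy : y ∈ ({a, b, c} : Finset V) := hsub (by simp)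
  simp only [Finset.mem_insert, Finset.mem_singleton] at hx hy
  rcases hx with rfl | rfl | rfl <;> rcases hy with rfl | rfl | rfl <;>
    first
      | exact absurd rfl hxy
      | exact Or.inl rfl
      | exact Or.inr (Or.inl rfl)
      | exact Or.inr (Or.inr rfl)
      | exact Or.inl (Finset.pair_comm _ _)
      | exact Or.inr (Or.inl (Finset.pair_comm _ _))
      | exact Or.inr (Or.inr (Finset.pair_comm _ _))

lemma cyclesIn_triangle {a b c : V} (hab : a ≠ b) (hac : a ≠ c) (hbc : b ≠ c)
    (K : Set (Finset V))
    (hmem : ∀ σ ∈ K, σ.card = 2 → σ = {a, b} ∨ σ = {b, c} ∨ σ = {a, c})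
    (h1 : ({a, b} : Finset V) ∈ K) (h2 : ({b, c} : Finset V) ∈ K)
    (h3 : ({a, c} : Finset V) ∈ K) :
    cyclesIn K 1 = Submodule.span (ZMod 2)
      {Finsupp.single {a, b} 1 + Finsupp.single {b, c} 1 + Finsupp.single {a, c} 1} := by
  have d12 := pair_ne_pair₁ hab hac
  have d13 := pair_ne_pair₂ hab hbc
  have d23 := pair_ne_pair₃ hab hbc
  set z : Finset V →₀ ZMod 2 :=
    Finsupp.single {a, b} 1 + Finsupp.single {b, c} 1 + Finsupp.single {a, c} 1 with hz
  apply le_antisymm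
  · rintro x ⟨hx1, hx2⟩
    set α := x {a, b} with hα
    set β := x {b, c} with hβ
    set γ := x {a, c} with hγ
    have hsupp : ∀ σ, σ ≠ {a, b} → σ ≠ {b, c} → σ ≠ {a, c} → x σ = 0 := by
      intro σ k1 k2 k3
      by_contra hne
      have hσ : σ ∈ x.support := Finsupp.mem_support_iff.mpr hne
      have := hx1 hσ
      rcases hmem σ this.1 this.2 with h | h | h <;> simp_all
    have hxrep : x = α • Finsupp.single {a, b} 1 + β • Finsupp.single {b, c} 1 +
        γ • Finsupp.single {a, c} 1 := by
      ext σ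
      by_cases k1 : σ = {a, b}
      · subst k1
        simp [Finsupp.single_apply, d12.symm, d13.symm, d12, d13, hα]
      by_cases k2 : σ = {b, c}
      · subst k2
        simp [Finsupp.single_apply, d12, d23, d12.symm, d23.symm, hβ]
      by_cases k3 : σ = {a, c}
      · subst k3
        simp [Finsupp.single_apply, d13, d23, d13.symm, d23.symm, hγ]
      · simp [Finsupp.single_apply, Ne.symm k1, Ne.symm k2, Ne.symm k3, hsupp σ k1 k2 k3]
    have hbx : bdry V x =
        α • (Finsupp.single {b} 1 + Finsupp.single {a} 1) +
        β • (Finsupp.single {c} 1 + Finsupp.single {b} 1) +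
        γ • (Finsupp.single {c} 1 + Finsupp.single {a} 1) := by
      rw [hxrep]
      simp only [map_add, map_smul, bdry_pair hab, bdry_pair hbc, bdry_pair hac]
    have hb0 : bdry V x = 0 := hx2
    rw [hbx] at hb0
    have sab : ({a} : Finset V) ≠ {b} := by simp [hab]
    have sac : ({a} : Finset V) ≠ {c} := by simp [hac]
    have sbc : ({b} : Finset V) ≠ {c} := by simp [hbc]
    have ea : α + γ = 0 := by
      have := DFunLike.congr_fun hb0 ({a} : Finset V)
      simpa [Finsupp.single_apply, sab, sac, sbc, Ne.symm sab, Ne.symm sac, Ne.symm sbc]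
        using this
    have eb : α + β = 0 := by
      have := DFunLike.congr_fun hb0 ({b} : Finset V)
      simpa [Finsupp.single_apply, sab, sac, sbc, Ne.symm sab, Ne.symm sac, Ne.symm sbc]
        using this
    have hβα : β = α := by
      have : ∀ u v : ZMod 2, u + v = 0 → v = u := by decide
      exact this _ _ eb
    have hγα : γ = α := by
      have : ∀ u v : ZMod 2, u + v = 0 → v = u := by decide
      exact this _ _ ea
    rw [Submodule.mem_span_singleton]
    refine ⟨α, ?_⟩
    rw [hxrep, hβα, hγα, hz]
    simp [smul_add]
  · rw [Submodule.span_le, Set.singleton_subset_iff]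
    constructor
    · exact Submodule.add_mem _ (Submodule.add_mem _
        (single_mem_chainsIn h1 (Finset.card_pair hab))
        (single_mem_chainsIn h2 (Finset.card_pair hbc)))
        (single_mem_chainsIn h3 (Finset.card_pair hac))
    · rw [SetLike.mem_coe, LinearMap.mem_ker, hz]
      simp only [map_add, bdry_pair hab, bdry_pair hbc, bdry_pair hac]
      have : ∀ u v w : Finset V →₀ ZMod 2,
          u + v + (w + u) + (w + v) = u + u + (v + v + (w + w)) := by
        intros; abel
      rw [this, char2_add_self, char2_add_self, char2_add_self]
      simp

lemma pBetti_triangle_zero {a b c : V} (hab : a ≠ b) (hac : a ≠ c) (hbc : b ≠ c)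
    (K L : Set (Finset V))
    (hmem : ∀ σ ∈ K, σ.card = 2 → σ = {a, b} ∨ σ = {b, c} ∨ σ = {a, c})
    (h1 : ({a, b} : Finset V) ∈ K) (h2 : ({b, c} : Finset V) ∈ K)
    (h3 : ({a, c} : Finset V) ∈ K) (hL : ({a, b, c} : Finset V) ∈ L) :
    pBetti K L 1 = 0 := by
  set z : Finset V →₀ ZMod 2 :=
    Finsupp.single {a, b} 1 + Finsupp.single {b, c} 1 + Finsupp.single {a, c} 1 with hz
  have hcard3 : ({a, b, c} : Finset V).card = 2 + 1 := by
    rw [Finset.card_insert_of_notMem (by simp [hab, hac]), Finset.card_pair hbc]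
  have hzB : z ∈ bdriesIn L 1 := by
    refine ⟨Finsupp.single {a, b, c} 1, single_mem_chainsIn hL hcard3, ?_⟩
    rw [bdry_triple hab hac hbc, hz]
    abel
  have hmap : Submodule.map (bdriesIn L 1).mkQ (cyclesIn K 1) = ⊥ := by
    rw [cyclesIn_triangle hab hac hbc K hmem h1 h2 h3, Submodule.map_span,
      Set.image_singleton]
    have : (bdriesIn L 1).mkQ z = 0 := by
      rw [Submodule.mkQ_apply, Submodule.Quotient.mk_eq_zero]
      exact hzB
    rw [← hz, this, Submodule.span_zero_singleton]
  rw [pBetti, hmap, rank_bot]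

lemma betti_triangle_one {a b c : V} (hab : a ≠ b) (hac : a ≠ c) (hbc : b ≠ c)
    (K : Set (Finset V))
    (hmem : ∀ σ ∈ K, σ.card = 2 → σ = {a, b} ∨ σ = {b, c} ∨ σ = {a, c})
    (h1 : ({a, b} : Finset V) ∈ K) (h2 : ({b, c} : Finset V) ∈ K)
    (h3 : ({a, c} : Finset V) ∈ K) (hno3 : ∀ σ ∈ K, σ.card ≠ 3) :
    betti K 1 = 1 := by
  set z : Finset V →₀ ZMod 2 :=
    Finsupp.single {a, b} 1 + Finsupp.single {b, c} 1 + Finsupp.single {a, c} 1 with hz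
  have hbd : bdriesIn K 1 = ⊥ := by
    rw [bdriesIn, chainsIn]
    have : {σ | σ ∈ K ∧ σ.card = 1 + 1 + 1} = ∅ := by
      ext σ
      simp only [Set.mem_setOf_eq, Set.mem_empty_iff_false, iff_false, not_and]
      exact fun h => hno3 σ h
    rw [this, Finsupp.supported_empty, Submodule.map_bot]
  have hzne : z ≠ 0 := by
    intro h
    have := DFunLike.congr_fun h ({a, b} : Finset V)
    rw [hz] at this
    simp [Finsupp.single_apply, Ne.symm (pair_ne_pair₁ hab hac),
      Ne.symm (pair_ne_pair₂ hab hbc)] at this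
  have hmkz : (bdriesIn K 1).mkQ z ≠ 0 := by
    intro h
    rw [Submodule.mkQ_apply, Submodule.Quotient.mk_eq_zero, hbd, Submodule.mem_bot] at h
    exact hzne h
  rw [betti, pBetti, cyclesIn_triangle hab hac hbc K hmem h1 h2 h3, Submodule.map_span,
    Set.image_singleton, ← hz, rank_span_set (LinearIndepOn.singleton (v := id) hmkz)]
  simp

end Alg

/-! ### Auxiliary geometric lemmas -/

noncomputable def pt (x y : ℝ) : EuclideanSpace ℝ (Fin 2) :=
  (WithLp.equiv 2 (Fin 2 → ℝ)).symm ![x, y]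

lemma dist_pt (u v : ℝ) (w : EuclideanSpace ℝ (Fin 2)) :
    dist (pt u v) w = Real.sqrt ((u - w 0) ^ 2 + (v - w 1) ^ 2) := by
  rw [EuclideanSpace.dist_eq, Fin.sum_univ_two]
  simp [pt, Real.dist_eq, sq_abs]

lemma dist_pt_pt (x1 y1 x2 y2 : ℝ) :
    dist (pt x1 y1) (pt x2 y2) = Real.sqrt ((x1 - x2) ^ 2 + (y1 - y2) ^ 2) := by
  rw [dist_pt]; rfl

lemma sqrt_eq' {X y : ℝ} (hy : 0 ≤ y) (h : y ^ 2 = X) : Real.sqrt X = y := by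
  rw [← h, Real.sqrt_sq hy]

noncomputable def s3 : ℝ := Real.sqrt 3
lemma s3_def : s3 = Real.sqrt 3 := rfl
lemma s3_sq : s3 ^ 2 = 3 := Real.sq_sqrt (by norm_num)
lemma s3_pos : 0 < s3 := Real.sqrt_pos.mpr (by norm_num)

noncomputable def Pa : EuclideanSpace ℝ (Fin 2) := pt 0 (11/10)
noncomputable def Pb : EuclideanSpace ℝ (Fin 2) := pt (11/20 * s3) (-(11/20))
noncomputable def Pc : EuclideanSpace ℝ (Fin 2) := pt (-(11/20 * s3)) (-(11/20))

lemma dist_ab : dist Pa Pb = s3 * (11/10) := by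
  rw [Pa, Pb, dist_pt_pt]
  exact sqrt_eq' (mul_nonneg s3_pos.le (by norm_num))
    (by linear_combination (363/400 : ℝ) * s3_sq)

lemma dist_ac : dist Pa Pc = s3 * (11/10) := by
  rw [Pa, Pc, dist_pt_pt]
  exact sqrt_eq' (mul_nonneg s3_pos.le (by norm_num))
    (by linear_combination (363/400 : ℝ) * s3_sq)

lemma dist_bc : dist Pb Pc = s3 * (11/10) := by
  rw [Pb, Pc, dist_pt_pt]
  exact sqrt_eq' (mul_nonneg s3_pos.le (by norm_num)) (by ring)

lemma dist_ao : dist Pa (pt 0 0) = 11/10 := by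
  rw [Pa, dist_pt_pt]
  exact sqrt_eq' (by norm_num) (by ring)

lemma dist_bo : dist Pb (pt 0 0) = 11/10 := by
  rw [Pb, dist_pt_pt]
  exact sqrt_eq' (by norm_num) (by linear_combination (-(121/400) : ℝ) * s3_sq)

lemma dist_co : dist Pc (pt 0 0) = 11/10 := by
  rw [Pc, dist_pt_pt]
  exact sqrt_eq' (by norm_num) (by linear_combination (-(121/400) : ℝ) * s3_sq)

lemma Pab : Pa ≠ Pb := by
  have := dist_ab; intro h; rw [h, dist_self] at this; nlinarith [s3_pos]

lemma Pac : Pa ≠ Pc := by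
  have := dist_ac; intro h; rw [h, dist_self] at this; nlinarith [s3_pos]

lemma Pbc : Pb ≠ Pc := by
  have := dist_bc; intro h; rw [h, dist_self] at this; nlinarith [s3_pos]

lemma le_one_of (u v u' v' : ℝ) (h : (u - u') ^ 2 + (v - v') ^ 2 ≤ 1) :
    dist (pt u v) (pt u' v') ≤ 1 := by
  rw [dist_pt_pt, Real.sqrt_le_one]
  exact h

lemma pair_ab : ∃ x, dist Pa x ≤ 1 ∧ dist Pb x ≤ 1 := by
  refine ⟨pt (11/40 * s3) (11/40), ?_, ?_⟩
  · exact le_one_of _ _ _ _ (by nlinarith [s3_sq])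
  · exact le_one_of _ _ _ _ (by nlinarith [s3_sq])

lemma pair_bc : ∃ x, dist Pb x ≤ 1 ∧ dist Pc x ≤ 1 := by
  refine ⟨pt 0 (-(11/20)), ?_, ?_⟩
  · exact le_one_of _ _ _ _ (by nlinarith [s3_sq])
  · exact le_one_of _ _ _ _ (by nlinarith [s3_sq])

lemma pair_ac : ∃ x, dist Pa x ≤ 1 ∧ dist Pc x ≤ 1 := by
  refine ⟨pt (-(11/40 * s3)) (11/40), ?_, ?_⟩
  · exact le_one_of _ _ _ _ (by nlinarith [s3_sq])
  · exact le_one_of _ _ _ _ (by nlinarith [s3_sq])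

lemma triple_far (x : EuclideanSpace ℝ (Fin 2)) :
    ¬ (dist Pa x ≤ 1 ∧ dist Pb x ≤ 1 ∧ dist Pc x ≤ 1) := by
  rintro ⟨h1, h2, h3⟩
  rw [Pa, dist_pt] at h1
  rw [Pb, dist_pt] at h2
  rw [Pc, dist_pt] at h3
  have q1 : (0 - x 0) ^ 2 + (11/10 - x 1) ^ 2 ≤ 1 := by
    have := Real.sqrt_nonneg ((0 - x 0) ^ 2 + (11/10 - x 1) ^ 2)
    nlinarith [Real.sq_sqrt (by positivity : (0:ℝ) ≤ (0 - x 0) ^ 2 + (11/10 - x 1) ^ 2)]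
  have q2 : (11/20 * s3 - x 0) ^ 2 + (-(11/20) - x 1) ^ 2 ≤ 1 := by
    have := Real.sqrt_nonneg ((11/20 * s3 - x 0) ^ 2 + (-(11/20) - x 1) ^ 2)
    nlinarith [Real.sq_sqrt
      (by positivity : (0:ℝ) ≤ (11/20 * s3 - x 0) ^ 2 + (-(11/20) - x 1) ^ 2)]
  have q3 : (-(11/20 * s3) - x 0) ^ 2 + (-(11/20) - x 1) ^ 2 ≤ 1 := by
    have := Real.sqrt_nonneg ((-(11/20 * s3) - x 0) ^ 2 + (-(11/20) - x 1) ^ 2)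
    nlinarith [Real.sq_sqrt
      (by positivity : (0:ℝ) ≤ (-(11/20 * s3) - x 0) ^ 2 + (-(11/20) - x 1) ^ 2)]
  nlinarith [s3_sq, sq_nonneg (x 0), sq_nonneg (x 1)]

/-! ### Čech complex facts for the three points -/

lemma habK : ({Pa, Pb} : Finset _) ∈ cech 2 1 {Pa, Pb, Pc} := by
  obtain ⟨x, h1, h2⟩ := pair_ab
  refine ⟨⟨Pa, by simp⟩, by intro z hz; simp at hz ⊢; tauto, x, ?_⟩
  intro b hb
  simp only [Finset.mem_insert, Finset.mem_singleton] at hb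
  rcases hb with rfl | rfl
  exacts [h1, h2]

lemma hbcK : ({Pb, Pc} : Finset _) ∈ cech 2 1 {Pa, Pb, Pc} := by
  obtain ⟨x, h1, h2⟩ := pair_bc
  refine ⟨⟨Pb, by simp⟩, by intro z hz; simp at hz ⊢; tauto, x, ?_⟩
  intro b hb
  simp only [Finset.mem_insert, Finset.mem_singleton] at hb
  rcases hb with rfl | rfl
  exacts [h1, h2]

lemma hacK : ({Pa, Pc} : Finset _) ∈ cech 2 1 {Pa, Pb, Pc} := by
  obtain ⟨x, h1, h2⟩ := pair_ac
  refine ⟨⟨Pa, by simp⟩, by intro z hz; simp at hz ⊢; tauto, x, ?_⟩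
  intro b hb
  simp only [Finset.mem_insert, Finset.mem_singleton] at hb
  rcases hb with rfl | rfl
  exacts [h1, h2]

lemma hmemK : ∀ σ ∈ cech 2 1 {Pa, Pb, Pc}, σ.card = 2 →
    σ = {Pa, Pb} ∨ σ = {Pb, Pc} ∨ σ = {Pa, Pc} := by
  intro σ hσ hc
  exact subset_card_two Pab Pac Pbc (Finset.coe_subset.mp hσ.2.1) hc

lemma triple_not_K : ({Pa, Pb, Pc} : Finset _) ∉ cech 2 1 {Pa, Pb, Pc} := by
  rintro ⟨-, -, x, hx⟩
  exact triple_far x ⟨hx _ (by simp), hx _ (by simp), hx _ (by simp)⟩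

lemma triple_L : ({Pa, Pb, Pc} : Finset _) ∈ cech 2 (1 + 1/5) {Pa, Pb, Pc} := by
  refine ⟨⟨Pa, by simp⟩, subset_rfl, pt 0 0, ?_⟩
  intro b hb
  simp only [Finset.mem_insert, Finset.mem_singleton] at hb
  rcases hb with rfl | rfl | rfl
  · rw [dist_ao]; norm_num
  · rw [dist_bo]; norm_num
  · rw [dist_co]; norm_num


/-- the bound `β_p(Čech_1, Čech_{1+ε}) ≤ β_p(Q_1)` can be strict: three points
equally spaced on a circle of radius strictly between `1` and `1+ε`, each in its own cell of a
partition of mesh `ε`, give `β_1(Čech_1, Čech_{1+ε}) = 0` and `β_1(Q_1) = 1`. -/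
theorem snap_bound_not_tight :
    ∃ (ε : ℝ) (A : Finset (EuclideanSpace ℝ (Fin 2)))
      (Ψ : Set (Set (EuclideanSpace ℝ (Fin 2))))
      (q : EuclideanSpace ℝ (Fin 2) → Set (EuclideanSpace ℝ (Fin 2))),
      0 < ε ∧ A.card = 3 ∧ IsPartitionMesh 2 ε Ψ ∧ (∀ x, q x ∈ Ψ ∧ x ∈ q x) ∧
      (∃ (o : EuclideanSpace ℝ (Fin 2)) (ρ : ℝ), 1 < ρ ∧ ρ < 1 + ε ∧
        (∀ x ∈ A, dist x o = ρ) ∧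
        (∀ x ∈ A, ∀ y ∈ A, x ≠ y → dist x y = Real.sqrt 3 * ρ)) ∧
      (∀ x ∈ A, ∀ y ∈ A, x ≠ y → q x ≠ q y) ∧
      pBetti (cech 2 1 A) (cech 2 (1 + ε) A) 1 = 0 ∧
      betti {τ | ∃ σ ∈ cech 2 1 A, τ = σ.image q} 1 = 1 := by
  classical
  refine ⟨1/5, {Pa, Pb, Pc},
    Set.range (fun x : EuclideanSpace ℝ (Fin 2) => ({x} : Set (EuclideanSpace ℝ (Fin 2)))),
    fun x => {x}, by norm_num, ?_, ?_, ?_, ?_, ?_, ?_, ?_⟩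
  · rw [Finset.card_insert_of_notMem (by simp [Pab, Pac]), Finset.card_pair Pbc]
  · constructor
    · intro x
      refine ⟨{x}, ⟨⟨x, rfl⟩, rfl⟩, ?_⟩
      rintro ψ ⟨⟨y, rfl⟩, hx⟩
      simp only [Set.mem_singleton_iff] at hx
      subst hx
      rfl
    · rintro ψ ⟨y, rfl⟩
      rw [show EMetric.diam ({y} : Set (EuclideanSpace ℝ (Fin 2))) = 0 from EMetric.diam_singleton]
      exact (zero_le : (0 : ENNReal) ≤ _)
  · exact fun x => ⟨⟨x, rfl⟩, rfl⟩
  · refine ⟨pt 0 0, 11/10, by norm_num, by norm_num, ?_, ?_⟩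
    · intro x hx
      simp only [Finset.mem_insert, Finset.mem_singleton] at hx
      rcases hx with rfl | rfl | rfl
      exacts [dist_ao, dist_bo, dist_co]
    · intro x hx y hy hxy
      rw [← s3_def]
      simp only [Finset.mem_insert, Finset.mem_singleton] at hx hy
      rcases hx with rfl | rfl | rfl <;> rcases hy with rfl | rfl | rfl <;>
        first
          | exact absurd rfl hxy
          | exact dist_ab
          | exact dist_ac
          | exact dist_bc
          | exact (dist_comm (α := EuclideanSpace ℝ (Fin 2)) _ _).trans dist_ab
          | exact (dist_comm (α := EuclideanSpace ℝ (Fin 2)) _ _).trans dist_ac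
          | exact (dist_comm (α := EuclideanSpace ℝ (Fin 2)) _ _).trans dist_bc
  · intro x _ y _ hxy h
    exact hxy (Set.singleton_injective h)
  · exact pBetti_triangle_zero Pab Pac Pbc _ _ hmemK habK hbcK hacK triple_L
  · have hinj : Function.Injective
        (fun x : EuclideanSpace ℝ (Fin 2) => ({x} : Set (EuclideanSpace ℝ (Fin 2)))) :=
      fun x y h => Set.singleton_injective h
    have hqab : ({Pa} : Set (EuclideanSpace ℝ (Fin 2))) ≠ {Pb} :=
      fun h => Pab (Set.singleton_injective h)
    have hqac : ({Pa} : Set (EuclideanSpace ℝ (Fin 2))) ≠ {Pc} :=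
      fun h => Pac (Set.singleton_injective h)
    have hqbc : ({Pb} : Set (EuclideanSpace ℝ (Fin 2))) ≠ {Pc} :=
      fun h => Pbc (Set.singleton_injective h)
    refine betti_triangle_one hqab hqac hqbc _ ?_ ?_ ?_ ?_ ?_
    · rintro τ ⟨σ, hσ, rfl⟩ hc
      rw [Finset.card_image_of_injective _ hinj] at hc
      rcases hmemK σ hσ hc with rfl | rfl | rfl
      · left; simp
      · right; left; simp
      · right; right; simp
    · exact ⟨{Pa, Pb}, habK, by simp⟩
    · exact ⟨{Pb, Pc}, hbcK, by simp⟩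
    · exact ⟨{Pa, Pc}, hacK, by simp⟩
    · rintro τ ⟨σ, hσ, rfl⟩ hc
      rw [Finset.card_image_of_injective _ hinj] at hc
      have hsub : σ ⊆ {Pa, Pb, Pc} := Finset.coe_subset.mp hσ.2.1
      have hAcard : ({Pa, Pb, Pc} : Finset (EuclideanSpace ℝ (Fin 2))).card = 3 := by
        rw [Finset.card_insert_of_notMem (by simp [Pab, Pac]), Finset.card_pair Pbc]
      have hσA : σ = {Pa, Pb, Pc} :=
        Finset.eq_of_subset_of_card_le hsub (by rw [hc, hAcard])
      exact triple_not_K (hσA ▸ hσ)
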